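/- With the same notation, the series ψ_{nk,T_{w,+}}(y) = ∑_{x ∈ T_{w,+} ∩ ℤ^n} ⟨x,y⟩^{-(n+nk)} converges absolutely and locally uniformly on the open set Ỹ_{w,+} = {y ∈ ℂ^n \ {0} : ∃λ ∈ ℂ^×, Re⟨w^{*(i)}, λy⟩ > 0 for all i = 1,...,n}. -/

import Mathlib

/-!
Write `aᵢₗ = τᵢ(wₗ)` and `bᵢₘ = τᵢ(w*ₘ)`. Since `∑ᵢ aᵢₗ bᵢₘ = Tr(wₗ w*ₘ) = δₗₘ`, every `x` equals
`∑ᵢ uᵢ bᵢ` with `uᵢ = ∑ₗ xₗ aᵢₗ`, and these are positive on the cone. Hence `‖x‖ ≤ ‖b‖ ∑ uᵢ`, while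
`Re ⟨x, λy⟩ = ∑ᵢ uᵢ Re ⟨bᵢ, λy⟩ ≥ ε ∑ uᵢ` as long as `y` stays near a point of `Ỹ_{w,+}`. So near such
a point the terms are bounded by `C ‖x‖^{-(n+nk)}` uniformly in `y`, and this majorant is summable
over `ℤⁿ` because `n + nk > n`; the Weierstrass M-test concludes.
-/

open scoped BigOperators

open NumberField

open Filter Topology Module

theorem NumberField.trace_eq_sum_of_injective {F : Type*} [Field F] [NumberField F]
    {ι : Type*} [Fintype ι] (τ : ι → F →+* ℝ) (hτ : Function.Injective τ)
    (hcard : Fintype.card ι = finrank ℚ F) (α : F) :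
    (Algebra.trace ℚ F α : ℝ) = ∑ i, τ i α := by
  let σ : ι → F →+* ℂ := fun i => Complex.ofRealHom.comp (τ i)
  have hσ : Function.Bijective σ := by
    refine (Fintype.bijective_iff_injective_and_card σ).2 ⟨fun i j hij => hτ ?_, ?_⟩
    · ext a
      simpa [σ] using RingHom.congr_fun hij a
    · rw [hcard, NumberField.Embeddings.card]
  have h : (Algebra.trace ℚ F α : ℂ) = ∑ i, σ i α := by
    rw [← eq_ratCast (algebraMap ℚ ℂ), trace_eq_sum_embeddings ℂ,
      ← (RingHom.equivRatAlgHom F ℂ).sum_comp, hσ.sum_comp fun φ : F →+* ℂ => φ α]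
    rfl
  simp only [σ, RingHom.comp_apply, Complex.ofRealHom_eq_coe] at h
  exact_mod_cast h

theorem eq_sum_smul_of_sum_mul_eq_ite {R ι : Type*} [CommSemiring R] [Fintype ι] [DecidableEq ι]
    {a b : ι → ι → R} (hab : ∀ l m, ∑ i, a i l * b i m = if l = m then 1 else 0) (x : ι → R) :
    x = ∑ i, (∑ l, x l * a i l) • b i := by
  ext m
  simp only [Finset.sum_apply, Pi.smul_apply, smul_eq_mul, Finset.sum_mul]
  rw [Finset.sum_comm]
  simp_rw [mul_assoc, ← Finset.mul_sum, hab]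
  simp

theorem norm_sum_smul_le_norm_mul_sum {ι E : Type*} [Fintype ι] [SeminormedAddCommGroup E]
    [NormedSpace ℝ E] (b : ι → E) {u : ι → ℝ} (hu : ∀ i, 0 ≤ u i) :
    ‖∑ i, u i • b i‖ ≤ ‖b‖ * ∑ i, u i := by
  rw [Finset.mul_sum]
  refine (norm_sum_le _ _).trans (Finset.sum_le_sum fun i _ => ?_)
  rw [norm_smul, Real.norm_of_nonneg (hu i), mul_comm]
  exact mul_le_mul_of_nonneg_right (norm_le_pi_norm b i) (hu i)

theorem sum_ofReal_mul_sum_smul {ι : Type*} [Fintype ι] (u : ι → ℝ) (b : ι → ι → ℝ)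
    (y : ι → ℂ) :
    ∑ l, ((∑ i, u i • b i) l : ℂ) * y l = ∑ i, (u i : ℂ) * ∑ l, (b i l : ℂ) * y l := by
  simp only [Finset.sum_apply, Pi.smul_apply, smul_eq_mul, Complex.ofReal_sum,
    Complex.ofReal_mul, Finset.sum_mul, Finset.mul_sum, mul_assoc]
  exact Finset.sum_comm

theorem mul_norm_le_norm_mul_norm_sum_of_mem_cone {ι : Type*} [Fintype ι] [DecidableEq ι]
    {a b : ι → ι → ℝ} (hab : ∀ l m, ∑ i, a i l * b i m = if l = m then 1 else 0)
    {x : ι → ℝ} (hx : ∀ i, 0 ≤ ∑ l, x l * a i l) {y : ι → ℂ} {ε : ℝ} (hε : 0 ≤ ε)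
    (hy : ∀ i, ε ≤ (∑ l, (b i l : ℂ) * y l).re) :
    ε * ‖x‖ ≤ ‖b‖ * ‖∑ l, (x l : ℂ) * y l‖ := by
  set u : ι → ℝ := fun i => ∑ l, x l * a i l
  have hxu : x = ∑ i, u i • b i := eq_sum_smul_of_sum_mul_eq_ite hab x
  have hre : ε * ∑ i, u i ≤ (∑ l, (x l : ℂ) * y l).re := by
    rw [hxu, sum_ofReal_mul_sum_smul, Complex.re_sum, Finset.mul_sum]
    refine Finset.sum_le_sum fun i _ => ?_
    rw [Complex.re_ofReal_mul, mul_comm]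
    exact mul_le_mul_of_nonneg_left (hy i) (hx i)
  calc ε * ‖x‖ ≤ ε * (‖b‖ * ∑ i, u i) := by
        rw [hxu]; exact mul_le_mul_of_nonneg_left (norm_sum_smul_le_norm_mul_sum b hx) hε
    _ = ‖b‖ * (ε * ∑ i, u i) := by ring
    _ ≤ ‖b‖ * ‖∑ l, (x l : ℂ) * y l‖ :=
        mul_le_mul_of_nonneg_left (hre.trans (Complex.re_le_norm _)) (norm_nonneg b)

theorem summable_norm_inv_pow_intVec {ι : Type*} [Fintype ι] {p : ℕ}
    (hp : Fintype.card ι < p) : Summable fun x : ι → ℤ => ‖x‖⁻¹ ^ p := by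
  classical
  let L := Submodule.span ℤ (Set.range (Pi.basisFun ℝ ι))
  let b : Basis ι ℤ L := (Pi.basisFun ℝ ι).restrictScalars ℤ
  have hL := ZLattice.summable_norm_pow_inv L p (finrank_eq_card_basis b ▸ hp)
  rw [← b.equivFun.symm.toEquiv.summable_iff] at hL
  refine hL.congr fun x => ?_
  have hx : (b.equivFun.symm x : ι → ℝ) = fun i => (x i : ℝ) := by
    ext i
    simp [b, Basis.equivFun_symm_apply, Basis.restrictScalars_apply ℤ (Pi.basisFun ℝ ι),
      Pi.single_apply]
  simp only [Function.comp_apply, LinearEquiv.coe_toEquiv, Submodule.coe_norm, hx]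
  rfl

theorem summable_norm_and_tendstoLocallyUniformlyOn_tsum {κ α E : Type*} [TopologicalSpace α]
    [NormedAddCommGroup E] [CompleteSpace E] {f : κ → α → E} {s : Set α}
    (h : ∀ y ∈ s, ∃ U ∈ 𝓝 y, ∃ u : κ → ℝ, Summable u ∧ ∀ x, ∀ z ∈ U, ‖f x z‖ ≤ u x) :
    (∀ y ∈ s, Summable fun x => ‖f x y‖) ∧
      TendstoLocallyUniformlyOn (fun t y => ∑ x ∈ t, f x y) (fun y => ∑' x, f x y) atTop s := by
  refine ⟨fun y hy => ?_, tendstoLocallyUniformlyOn_of_forall_exists_nhds fun y hy => ?_⟩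
  · obtain ⟨U, hU, u, hu, hfu⟩ := h y hy
    exact .of_nonneg_of_le (fun _ => norm_nonneg _) (fun x => hfu x y (mem_of_mem_nhds hU)) hu
  · obtain ⟨U, hU, u, hu, hfu⟩ := h y hy
    exact ⟨U, nhdsWithin_le_nhds hU, tendstoUniformlyOn_tsum hu fun x z hz => hfu x z hz⟩

theorem inv_le_div_mul_inv_of_mul_le {ε K s t : ℝ} (hε : 0 < ε) (hs : 0 < s) (ht : 0 ≤ t)
    (h : ε * s ≤ K * t) : t⁻¹ ≤ K / ε * s⁻¹ := by
  have hKt : 0 < K * t := (mul_pos hε hs).trans_le h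
  have htpos : 0 < t := lt_of_le_of_ne ht fun h0 => by simp [← h0] at hKt
  rw [← div_eq_mul_inv, div_div, le_div_iff₀ (mul_pos hε hs), inv_mul_le_iff₀ htpos, mul_comm t]
  exact h

theorem exists_nhds_norm_sum_mul_zpow_le {ι : Type*} [Fintype ι] [DecidableEq ι]
    {a b : ι → ι → ℝ} (hab : ∀ l m, ∑ i, a i l * b i m = if l = m then 1 else 0) (M : ℕ)
    {y₀ : ι → ℂ} {lam : ℂ} (hy₀ : ∀ i, 0 < (∑ l, (b i l : ℂ) * (lam * y₀ l)).re) :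
    ∃ U ∈ 𝓝 y₀, ∃ C : ℝ, ∀ x : ι → ℤ, (∀ i, 0 < ∑ l, (x l : ℝ) * a i l) → ∀ y ∈ U,
      ‖(∑ l, (x l : ℂ) * y l) ^ (-(M : ℤ))‖ ≤ C * ‖x‖⁻¹ ^ M := by
  obtain ⟨ε, hεy₀, hε⟩ : ∃ ε, (∀ i, ε < (∑ l, (b i l : ℂ) * (lam * y₀ l)).re) ∧ 0 < ε :=
    ((eventually_all.2 fun i => eventually_lt_nhds (hy₀ i)).filter_mono nhdsWithin_le_nhds
      |>.and self_mem_nhdsWithin).exists (f := 𝓝[>] 0)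
  refine ⟨{y | ∀ i, ε < (∑ l, (b i l : ℂ) * (lam * y l)).re}, ?_, (‖b‖ * ‖lam‖ / ε) ^ M, ?_⟩
  · exact eventually_all.2 fun i =>
      Tendsto.eventually_const_lt (hεy₀ i) (by fun_prop : Continuous _).continuousAt
  intro x hx y hy
  have hnorm : ‖(∑ l, (x l : ℂ) * y l) ^ (-(M : ℤ))‖ = ‖∑ l, (x l : ℂ) * y l‖⁻¹ ^ M := by
    rw [norm_zpow, zpow_neg, zpow_natCast, inv_pow]
  rw [hnorm, ← mul_pow]
  refine pow_le_pow_left₀ (inv_nonneg.2 (norm_nonneg _)) ?_ M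
  rcases eq_or_ne x 0 with rfl | hx0
  · simp
  have hest := mul_norm_le_norm_mul_norm_sum_of_mem_cone hab (x := fun l => (x l : ℝ))
    (fun i => (hx i).le) (y := fun l => lam * y l) hε.le (fun i => (hy i).le)
  have hlam : ‖∑ l, ((x l : ℝ) : ℂ) * (lam * y l)‖ = ‖lam‖ * ‖∑ l, (x l : ℂ) * y l‖ := by
    rw [← norm_mul, Finset.mul_sum]
    congr 1
    exact Finset.sum_congr rfl fun l _ => by push_cast; ring
  rw [hlam, ← mul_assoc] at hest
  exact inv_le_div_mul_inv_of_mul_le hε (norm_pos_iff.2 hx0) (norm_nonneg _) hest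

theorem psi_converges_totally_positive_cone_general (F : Type*) [Field F]
    [NumberField F] (n : ℕ) (hn : 0 < n) (hdeg : Module.finrank ℚ F = n)
    (τ : Fin n → (F →+* ℝ)) (hτ : Function.Injective τ)
    (w : Fin n → F)
    (wst : Fin n → F)
    (hdual : ∀ i j, Algebra.trace ℚ F (w i * wst j) = if i = j then 1 else 0)
    (k : ℕ) (hk : 1 ≤ k) :
    (∀ y ∈ {y : Fin n → ℂ | y ≠ 0 ∧ ∃ lam : ℂ, lam ≠ 0 ∧
        ∀ i, 0 < (∑ l, (τ i (wst l) : ℂ) * (lam * y l)).re},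
      Summable fun x : {x : Fin n → ℤ // ∀ i, 0 < ∑ l, (x l : ℝ) * τ i (w l)} =>
        ‖(∑ l, (x.1 l : ℂ) * y l) ^ (-(n + n * k : ℤ))‖) ∧
    TendstoLocallyUniformlyOn
      (fun (s : Finset {x : Fin n → ℤ // ∀ i, 0 < ∑ l, (x l : ℝ) * τ i (w l)})
          (y : Fin n → ℂ) =>
        ∑ x ∈ s, (∑ l, (x.1 l : ℂ) * y l) ^ (-(n + n * k : ℤ)))
      (fun y => ∑' x : {x : Fin n → ℤ // ∀ i, 0 < ∑ l, (x l : ℝ) * τ i (w l)},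
        (∑ l, (x.1 l : ℂ) * y l) ^ (-(n + n * k : ℤ)))
      Filter.atTop
      {y : Fin n → ℂ | y ≠ 0 ∧ ∃ lam : ℂ, lam ≠ 0 ∧
        ∀ i, 0 < (∑ l, (τ i (wst l) : ℂ) * (lam * y l)).re} := by
  have hδ : ∀ l m, ∑ i, τ i (w l) * τ i (wst m) = if l = m then 1 else 0 := fun l m => by
    simp_rw [← map_mul]
    rw [← NumberField.trace_eq_sum_of_injective τ hτ (by simp [hdeg]), hdual]
    split_ifs <;> simp
  have hM : n < n + n * k := by nlinarith
  rw [show (-(n + n * k : ℤ)) = -((n + n * k : ℕ) : ℤ) by push_cast; ring]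
  refine summable_norm_and_tendstoLocallyUniformlyOn_tsum fun y₀ ⟨_, lam, _, hy₀⟩ => ?_
  obtain ⟨U, hU, C, hC⟩ := exists_nhds_norm_sum_mul_zpow_le hδ (n + n * k) hy₀
  refine ⟨U, hU, fun x => C * ‖x.1‖⁻¹ ^ (n + n * k), ?_, fun x y hy => hC x.1 x.2 y hy⟩
  exact ((summable_norm_inv_pow_intVec (by simpa using hM)).comp_injective
    Subtype.val_injective).mul_left C

/-- With notation as before, the series
`ψ_{nk,T_{w,+}}(y) = ∑_{x ∈ T_{w,+} ∩ ℤ^n} ⟨x,y⟩^{-(n+nk)}` converges absolutely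
and locally uniformly on the open set
`Ỹ_{w,+} = {y ∈ ℂ^n \ {0} : ∃ λ ∈ ℂ^×, Re⟨w^{*(i)}, λ y⟩ > 0 ∀ i}`. -/
theorem psi_converges_totally_positive_cone (F : Type*) [Field F]
    [NumberField F] (n : ℕ) (hn : 0 < n) (hdeg : Module.finrank ℚ F = n)
    (τ : Fin n → (F →+* ℝ)) (hτ : Function.Injective τ)
    (𝔞 : FractionalIdeal (nonZeroDivisors (𝓞 F)) F)
    (w : Fin n → F)
    (hw : ∀ x : F, x ∈ 𝔞 ↔ ∃ c : Fin n → ℤ, x = ∑ l, c l • w l)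
    (hwind : LinearIndependent ℤ w)
    (wst : Fin n → F)
    (hdual : ∀ i j, Algebra.trace ℚ F (w i * wst j) = if i = j then 1 else 0)
    (k : ℕ) (hk : 1 ≤ k) :
    (∀ y ∈ {y : Fin n → ℂ | y ≠ 0 ∧ ∃ lam : ℂ, lam ≠ 0 ∧
        ∀ i, 0 < (∑ l, (τ i (wst l) : ℂ) * (lam * y l)).re},
      Summable fun x : {x : Fin n → ℤ // ∀ i, 0 < ∑ l, (x l : ℝ) * τ i (w l)} =>
        ‖(∑ l, (x.1 l : ℂ) * y l) ^ (-(n + n * k : ℤ))‖) ∧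
    TendstoLocallyUniformlyOn
      (fun (s : Finset {x : Fin n → ℤ // ∀ i, 0 < ∑ l, (x l : ℝ) * τ i (w l)})
          (y : Fin n → ℂ) =>
        ∑ x ∈ s, (∑ l, (x.1 l : ℂ) * y l) ^ (-(n + n * k : ℤ)))
      (fun y => ∑' x : {x : Fin n → ℤ // ∀ i, 0 < ∑ l, (x l : ℝ) * τ i (w l)},
        (∑ l, (x.1 l : ℂ) * y l) ^ (-(n + n * k : ℤ)))
      Filter.atTop
      {y : Fin n → ℂ | y ≠ 0 ∧ ∃ lam : ℂ, lam ≠ 0 ∧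
        ∀ i, 0 < (∑ l, (τ i (wst l) : ℂ) * (lam * y l)).re} :=
  psi_converges_totally_positive_cone_general F n hn hdeg τ hτ w wst hdual k hk
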